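/- Let C ⊆ ℝ^m be a convex set and F a proper face of C (a face with F ∉ {∅, C}). Then the smallest exposed face of C containing F exists and is a proper exposed face of C. -/

import Mathlib

/-!
A point `x` of the relative interior of `F` is not in the relative interior of `C`, since a
face meeting the relative interior of a convex set contains all of it. Hahn–Banach, applied
inside the affine span of `C`, then gives a functional maximised on `C` at `x` and not constant
on `C`; its exposed face is proper and, meeting the relative interior of `F`, contains `F`.
An exposed face `G ⊇ F` whose affine span has least dimension is the smallest one: for any other
exposed `G' ⊇ F`, the exposed face `G ∩ G'` is a face of `G`, and a proper face of a convex set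
has an affine span of smaller dimension.
-/

open Set Topology

section TopologicalVectorSpace

variable {E : Type*} [AddCommGroup E] [Module ℝ E] [TopologicalSpace E]
  [IsTopologicalAddGroup E] [ContinuousSMul ℝ E] {s : Set E} {x y : E}

theorem exists_mem_openSegment_of_mem_intrinsicInterior (hx : x ∈ intrinsicInterior ℝ s)
    (hy : y ∈ s) : ∃ z ∈ s, x ∈ openSegment ℝ y z := by
  obtain ⟨p, hp, rfl⟩ := hx
  let path : ℝ → affineSpan ℝ s := fun t =>
    ⟨AffineMap.lineMap (p : E) y t, AffineMap.lineMap_mem t p.2 (subset_affineSpan ℝ s hy)⟩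
  have hpath : Continuous path := AffineMap.lineMap_continuous.subtype_mk _
  have hnear : ∀ᶠ t in 𝓝[<] (0 : ℝ), path t ∈ ((↑) ⁻¹' s : Set (affineSpan ℝ s)) := by
    refine nhdsWithin_le_nhds (hpath.continuousAt.preimage_mem_nhds ?_)
    simpa [path] using mem_interior_iff_mem_nhds.1 hp
  -- `lineMap x y t` with `t < 0` lies beyond `x` on the line from `y` through `x`.
  obtain ⟨t, hts, ht⟩ := (hnear.and self_mem_nhdsWithin).exists
  have h1t : 1 - t ≠ 0 := (sub_pos.2 (ht.trans one_pos)).ne'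
  refine ⟨AffineMap.lineMap (p : E) y t, hts, -t / (1 - t), 1 / (1 - t), by bound, by bound,
    by field_simp; ring, ?_⟩
  rw [AffineMap.lineMap_apply_module]
  match_scalars <;> field_simp
  ring

theorem IsExtreme.subset_of_mem_intrinsicInterior {C B : Set E} (hB : IsExtreme ℝ C B)
    (hsC : s ⊆ C) (hxB : x ∈ B) (hxs : x ∈ intrinsicInterior ℝ s) : s ⊆ B := fun y hy => by
  obtain ⟨z, hz, hxyz⟩ := exists_mem_openSegment_of_mem_intrinsicInterior hxs hy
  exact hB.2 (hsC hy) (hsC hz) hxB hxyz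

end TopologicalVectorSpace

theorem intrinsicInterior_mono_of_affineSpan_eq {𝕜 V P : Type*} [Ring 𝕜] [AddCommGroup V]
    [Module 𝕜 V] [TopologicalSpace P] [AddTorsor V P] {s t : Set P} (hst : s ⊆ t)
    (h : affineSpan 𝕜 s = affineSpan 𝕜 t) : intrinsicInterior 𝕜 s ⊆ intrinsicInterior 𝕜 t := by
  unfold intrinsicInterior
  rw [h]
  exact image_mono (interior_mono (preimage_mono hst))

theorem vectorSpan_le_ker_of_forall_eq {k V W : Type*} [Ring k] [AddCommGroup V] [Module k V]
    [AddCommGroup W] [Module k W] {s : Set V} {x : V} (l : V →ₗ[k] W)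
    (h : ∀ y ∈ s, l y = l x) : vectorSpan k s ≤ LinearMap.ker l := by
  rw [vectorSpan_def, Submodule.span_le]
  rintro _ ⟨a, ha, b, hb, rfl⟩
  simp [h a ha, h b hb]

section FiniteDimensional

variable {E : Type*} [NormedAddCommGroup E] [NormedSpace ℝ E] [FiniteDimensional ℝ E]

theorem IsExtreme.eq_of_affineSpan_eq {K B : Set E} (hB : IsExtreme ℝ K B) (hBconv : Convex ℝ B)
    (hBne : B.Nonempty) (h : affineSpan ℝ B = affineSpan ℝ K) : B = K := by
  obtain ⟨x, hx⟩ := hBne.intrinsicInterior hBconv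
  exact hB.1.antisymm <| hB.subset_of_mem_intrinsicInterior subset_rfl
    (intrinsicInterior_subset hx) (intrinsicInterior_mono_of_affineSpan_eq hB.1 h hx)

theorem IsExtreme.finrank_vectorSpan_lt {K B : Set E} (hB : IsExtreme ℝ K B)
    (hBconv : Convex ℝ B) (hBne : B.Nonempty) (hBK : B ≠ K) :
    Module.finrank ℝ (vectorSpan ℝ B) < Module.finrank ℝ (vectorSpan ℝ K) := by
  refine Submodule.finrank_lt_finrank_of_lt ((vectorSpan_mono ℝ hB.1).lt_of_ne fun h => hBK ?_)
  obtain ⟨b, hb⟩ := hBne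
  refine hB.eq_of_affineSpan_eq hBconv ⟨b, hb⟩ (AffineSubspace.ext_of_direction_eq ?_ ?_)
  · simpa only [direction_affineSpan] using h
  · exact ⟨b, subset_affineSpan ℝ B hb, subset_affineSpan ℝ K (hB.1 hb)⟩

theorem exists_supporting_strongDual_of_notMem_intrinsicInterior {C : Set E} {x : E}
    (hC : Convex ℝ C) (hxC : x ∈ C) (hx : x ∉ intrinsicInterior ℝ C) :
    ∃ l : StrongDual ℝ E, (∀ y ∈ C, l y ≤ l x) ∧ ∃ y ∈ C, l y < l x := by
  let p : affineSpan ℝ C := ⟨x, subset_affineSpan ℝ C hxC⟩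
  have : Nonempty (affineSpan ℝ C) := ⟨p⟩
  let e := AffineIsometryEquiv.vaddConst ℝ p
  -- `C` translated by `-x` into `vectorSpan ℝ C`, where it has nonempty interior.
  let A : Set (affineSpan ℝ C).direction := e ⁻¹' ((↑) ⁻¹' C)
  have hA : Convex ℝ A := hC.affine_preimage ((affineSpan ℝ C).subtype.comp e.toAffineMap)
  have hinterior : interior A = e ⁻¹' interior ((↑) ⁻¹' C) :=
    (e.toHomeomorph.preimage_interior _).symm
  have h0 : (0 : (affineSpan ℝ C).direction) ∉ interior A := by
    rw [hinterior]
    exact fun h => hx ⟨_, h, by simp [e, p]⟩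
  have hAint : (interior A).Nonempty := by
    obtain ⟨_, q, hq, rfl⟩ := Set.Nonempty.intrinsicInterior hC ⟨x, hxC⟩
    exact ⟨e.symm q, by simpa [hinterior] using hq⟩
  obtain ⟨f, hf0, hfA⟩ := geometric_hahn_banach_of_nonempty_interior_point hA h0 hAint
  obtain ⟨l, hlf, -⟩ := exists_extension_norm_eq (affineSpan ℝ C).direction f
  have hdir : ∀ y ∈ C, y - x ∈ (affineSpan ℝ C).direction := fun y hy => by
    rw [direction_affineSpan]; exact vsub_mem_vectorSpan ℝ hy hxC
  have hlC : ∀ y (hy : y ∈ C), l y - l x = f ⟨y - x, hdir y hy⟩ := fun y hy => by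
    rw [← map_sub]; exact hlf ⟨y - x, _⟩
  have hle : ∀ y ∈ C, l y ≤ l x := fun y hy => by
    have := hfA ⟨y - x, hdir y hy⟩ (by simpa [A, e, p] using hy)
    rw [map_zero] at this
    linarith [hlC y hy]
  refine ⟨l, hle, ?_⟩
  by_contra! hconst
  have hker := vectorSpan_le_ker_of_forall_eq (l : E →ₗ[ℝ] ℝ) fun y hy =>
    (hle y hy).antisymm (hconst y hy)
  refine hf0 (ContinuousLinearMap.ext fun v => ?_)
  rw [← hlf]
  exact hker (direction_affineSpan ℝ C ▸ v.2)

theorem IsExtreme.exists_isExposed_superset_ne {C F : Set E} (hC : Convex ℝ C)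
    (hF : IsExtreme ℝ C F) (hFconv : Convex ℝ F) (hFne : F.Nonempty) (hFC : F ≠ C) :
    ∃ G, IsExposed ℝ C G ∧ F ⊆ G ∧ G ≠ C := by
  obtain ⟨x, hx⟩ := hFne.intrinsicInterior hFconv
  have hxF : x ∈ F := intrinsicInterior_subset hx
  have hxC : x ∉ intrinsicInterior ℝ C := fun h =>
    hFC (hF.1.antisymm (hF.subset_of_mem_intrinsicInterior subset_rfl hxF h))
  obtain ⟨l, hle, y, hyC, hlt⟩ :=
    exists_supporting_strongDual_of_notMem_intrinsicInterior hC (hF.1 hxF) hxC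
  refine ⟨l.toExposed C, ContinuousLinearMap.toExposed.isExposed, ?_, fun h => ?_⟩
  · exact ContinuousLinearMap.toExposed.isExposed.isExtreme.subset_of_mem_intrinsicInterior hF.1
      ⟨hF.1 hxF, hle⟩ hx
  · have hy : y ∈ l.toExposed C := by rwa [h]
    exact hlt.not_ge (hy.2 x (hF.1 hxF))

theorem exists_minimal_isExposed_superset {C F : Set E} (hC : Convex ℝ C) (hFC : F ⊆ C)
    (hFne : F.Nonempty) :
    ∃ G, IsExposed ℝ C G ∧ F ⊆ G ∧ ∀ G', IsExposed ℝ C G' → F ⊆ G' → G ⊆ G' := by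
  obtain ⟨G, ⟨hG, hFG⟩, hmin⟩ :=
    (measure fun G : Set E => Module.finrank ℝ (vectorSpan ℝ G)).wf.has_min
      {G | IsExposed ℝ C G ∧ F ⊆ G} ⟨C, IsExposed.refl C, hFC⟩
  refine ⟨G, hG, hFG, fun G' hG' hFG' => ?_⟩
  by_contra hGG'
  have hGG'exp : IsExposed ℝ C (G ∩ G') := hG.inter hG'
  have hFGG' : F ⊆ G ∩ G' := subset_inter hFG hFG'
  refine hmin (G ∩ G') ⟨hGG'exp, hFGG'⟩ ?_
  exact (hGG'exp.isExtreme.mono hG.subset inter_subset_left).finrank_vectorSpan_lt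
    (hGG'exp.convex hC) (hFne.mono hFGG') fun h => hGG' (h ▸ inter_subset_right)

end FiniteDimensional

/-- for a proper face `F` of a convex set `C ⊆ ℝ^m` (a face with
`F ∉ {∅, C}`), the smallest exposed face of `C` containing `F` exists and is a proper
exposed face of `C`. -/
theorem stmt11 {m : ℕ} (C : Set (EuclideanSpace ℝ (Fin m))) (hC : Convex ℝ C)
    (F : Set (EuclideanSpace ℝ (Fin m))) (hFconv : Convex ℝ F)
    (hFface : IsExtreme ℝ C F) (hFne : F ≠ ∅) (hFC : F ≠ C) :
    ∃ G : Set (EuclideanSpace ℝ (Fin m)),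
      IsExposed ℝ C G ∧ F ⊆ G ∧ G ≠ ∅ ∧ G ≠ C ∧
      ∀ G', IsExposed ℝ C G' → F ⊆ G' → G ⊆ G' := by
  have hFne : F.Nonempty := nonempty_iff_ne_empty.2 hFne
  obtain ⟨G, hG, hFG, hmin⟩ := exists_minimal_isExposed_superset hC hFface.1 hFne
  obtain ⟨G₁, hG₁, hFG₁, hG₁C⟩ := hFface.exists_isExposed_superset_ne hC hFconv hFne hFC
  refine ⟨G, hG, hFG, (hFne.mono hFG).ne_empty, fun hGC => hG₁C ?_, hmin⟩
  exact hG₁.subset.antisymm (hGC ▸ hmin G₁ hG₁ hFG₁)
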